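/- Let Z be a locally complete metric measure space with an infinitesimally doubling reference measure that is finite and positive on all balls, and let Z̄ be a metric completion of Z (with the pushforward measure). If Z is very ∞-thick (C,R)-quasiconvex, then Z̄ is very ∞-thick (C′,R)-quasiconvex for every C′ > C. -/

import Mathlib

open MeasureTheory Metric Set ENNReal NNReal

/-- A rectifiable curve in arclength (unit-speed) parametrization: a `1`-Lipschitz map
on `[0, len]`. -/
structure Curve (Z : Type*) [MetricSpace Z] where
  toFun : ℝ → Z
  len : ℝ
  len_nonneg : 0 ≤ len
  lip : LipschitzOnWith 1 toFun (Set.Icc 0 len)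

namespace Curve

variable {Z : Type*} [MetricSpace Z]

/-- The starting point of a curve. -/
def start (γ : Curve Z) : Z := γ.toFun 0

/-- The end point of a curve. -/
def finish (γ : Curve Z) : Z := γ.toFun γ.len

/-- The curve integral `∫_γ ρ ds`, computed in the unit-speed parametrization. -/
noncomputable def integ (γ : Curve Z) (ρ : Z → ℝ≥0∞) : ℝ≥0∞ :=
  ∫⁻ s in Set.Icc (0 : ℝ) γ.len, ρ (γ.toFun s)

end Curve

variable {Z : Type*} [MetricSpace Z] [MeasurableSpace Z]

/-- A curve family is `∞`-negligible if some nonnegative Borel function vanishing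
`μ`-a.e. has infinite curve integral over every member of the family. -/
def InfNegligible (μ : Measure Z) (Γ : Set (Curve Z)) : Prop :=
  ∃ ρ : Z → ℝ≥0∞, Measurable ρ ∧ (∀ᵐ z ∂μ, ρ z = 0) ∧ ∀ γ ∈ Γ, γ.integ ρ = ∞

/-- The family `Γ(x, y; C)` of `C`-quasiconvex curves joining `x` to `y`. -/
def qcFam (C : ℝ) (x y : Z) : Set (Curve Z) :=
  {γ | γ.start = x ∧ γ.finish = y ∧ γ.len ≤ C * dist x y}

/-- `Z` is very `∞`-thick `(C, R)`-quasiconvex. -/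
def VeryThick (μ : Measure Z) (C : ℝ) (R : ℝ≥0∞) : Prop :=
  ∀ x₀ x y : Z, edist x x₀ < R → edist y x₀ < R → ¬ InfNegligible μ (qcFam C x y)

/-- The family `Γ(E, F; C)` of curves joining `E` to `F` that are `C`-quasiconvex. -/
def thickFam (C : ℝ) (E F : Set Z) : Set (Curve Z) :=
  {γ | γ.start ∈ E ∧ γ.finish ∈ F ∧ γ.len ≤ C * dist γ.start γ.finish}

/-- `Z` is `∞`-thick `(C, R)`-quasiconvex. -/
def ThickQC (μ : Measure Z) (C : ℝ) (R : ℝ≥0∞) : Prop :=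
  ∀ x₀ : Z, ∀ E F : Set Z, MeasurableSet E → MeasurableSet F →
    E ⊆ {z | edist z x₀ < R} → F ⊆ {z | edist z x₀ < R} →
    0 < μ E → 0 < μ F → ¬ InfNegligible μ (thickFam C E F)

/-- `Z` is locally complete. -/
def LocallyComplete (Z : Type*) [MetricSpace Z] : Prop :=
  ∀ z : Z, ∃ ε > (0 : ℝ), IsComplete (Metric.closedBall z ε)

/-- The measure `μ` is infinitesimally doubling. -/
def InfinitesimallyDoubling (μ : Measure Z) : Prop :=
  ∀ᵐ z ∂μ, ∃ K : ℝ≥0, ∃ r₀ > (0 : ℝ), ∀ r : ℝ, 0 < r → r < r₀ →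
    μ (Metric.ball z (2 * r)) ≤ K * μ (Metric.ball z r)

/-- Every ball has positive and finite measure. -/
def BallsPosFin (μ : Measure Z) : Prop :=
  ∀ (z : Z) (r : ℝ), 0 < r → 0 < μ (Metric.ball z r) ∧ μ (Metric.ball z r) < ∞

/-- `ρ` is an `∞`-weak upper gradient of `u`. -/
def IsInfWeakUpperGrad (μ : Measure Z) (u : Z → ℝ) (ρ : Z → ℝ≥0∞) : Prop :=
  Measurable ρ ∧ ∃ Γ₀ : Set (Curve Z), InfNegligible μ Γ₀ ∧
    ∀ γ : Curve Z, γ ∉ Γ₀ → ENNReal.ofReal |u γ.start - u γ.finish| ≤ γ.integ ρ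

/-!
Every point of the completion is the limit of a fast converging sequence `pₙ` in `Z`. Fix a
Borel `ρ` vanishing a.e. on the completion. Since the families `Γ(pₙ, pₙ₊₁; C)` are not
`∞`-negligible in `Z`, each contains a curve on which `ρ` integrates to zero; concatenating
them gives a curve from `p₀` to the limit `x` of length `≲ C · dist (p₀, x)` on which `ρ` still
integrates to zero. Two such tails, at `x` and at `y`, joined by a curve of `Γ(p₀, q₀; C)`, form a
member of `Γ(x, y; C')` with zero `ρ`-integral, so `Γ(x, y; C')` is not `∞`-negligible.
-/

open Filter Topology

section Lipschitz

variable {W : Type*} [MetricSpace W] {f : ℝ → W} {K : ℝ≥0}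

theorem lipschitzOnWith_of_forall_le {s : Set ℝ}
    (h : ∀ x ∈ s, ∀ y ∈ s, x ≤ y → dist (f x) (f y) ≤ K * (y - x)) :
    LipschitzOnWith K f s := by
  refine lipschitzOnWith_iff_dist_le_mul.2 fun x hx y hy => ?_
  rcases le_total x y with hxy | hyx
  · simpa [Real.dist_eq, abs_of_nonpos (sub_nonpos.2 hxy)] using h x hx y hy hxy
  · simpa [dist_comm (f x), Real.dist_eq, abs_of_nonneg (sub_nonneg.2 hyx)] using h y hy x hx hyx

theorem LipschitzOnWith.Icc_union_Icc {a b c : ℝ}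
    (hab : LipschitzOnWith K f (Icc a b)) (hbc : LipschitzOnWith K f (Icc b c)) :
    LipschitzOnWith K f (Icc a c) := by
  refine lipschitzOnWith_of_forall_le fun s hs t ht hst => ?_
  have dist_le {u v : ℝ} (huv : u ≤ v) (h : LipschitzOnWith K f (Icc u v)) :
      dist (f u) (f v) ≤ K * (v - u) := by
    simpa [Real.dist_eq, abs_of_nonpos (sub_nonpos.2 huv), dist_comm]
      using h.dist_le_mul u ⟨le_rfl, huv⟩ v ⟨huv, le_rfl⟩
  rcases le_total t b with htb | hbt
  · exact dist_le hst (hab.mono (Icc_subset_Icc hs.1 htb))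
  rcases le_total s b with hsb | hbs
  · calc dist (f s) (f t) ≤ dist (f s) (f b) + dist (f b) (f t) := dist_triangle _ _ _
      _ ≤ K * (b - s) + K * (t - b) :=
          add_le_add (dist_le hsb (hab.mono (Icc_subset_Icc hs.1 le_rfl)))
            (dist_le hbt (hbc.mono (Icc_subset_Icc le_rfl ht.2)))
      _ = K * (t - s) := by ring
  · exact dist_le hst (hbc.mono (Icc_subset_Icc hbs ht.2))

end Lipschitz

section Glue

variable {α : Type*} {f g : ℝ → α} {a b t : ℝ}

noncomputable def glue (f g : ℝ → α) (a t : ℝ) : α :=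
  if t ≤ a then f t else g (t - a)

theorem glue_of_le (h : t ≤ a) : glue f g a t = f t :=
  if_pos h

theorem glue_of_ge (hfg : f a = g 0) (h : a ≤ t) : glue f g a t = g (t - a) := by
  rcases h.eq_or_lt with rfl | h
  · rw [glue_of_le le_rfl, sub_self, hfg]
  · exact if_neg h.not_ge

theorem lipschitzOnWith_glue [MetricSpace α] {K : ℝ≥0} (hfg : f a = g 0)
    (hf : LipschitzOnWith K f (Icc 0 a)) (hg : LipschitzOnWith K g (Icc 0 b)) :
    LipschitzOnWith K (glue f g a) (Icc 0 (a + b)) := by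
  refine LipschitzOnWith.Icc_union_Icc (b := a) ?_ ?_
  · intro s hs t ht
    rw [glue_of_le hs.2, glue_of_le ht.2]
    exact hf hs ht
  · intro s hs t ht
    rw [glue_of_ge hfg hs.1, glue_of_ge hfg ht.1, ← edist_sub_right s t a]
    exact hg ⟨sub_nonneg.2 hs.1, by linarith [hs.2]⟩ ⟨sub_nonneg.2 ht.1, by linarith [ht.2]⟩

theorem setLIntegral_glue_le (ρ : α → ℝ≥0∞) :
    ∫⁻ t in Icc 0 (a + b), ρ (glue f g a t) ≤
      (∫⁻ t in Icc 0 a, ρ (f t)) + ∫⁻ t in Icc 0 b, ρ (g t) := by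
  have hshift := (measurePreserving_add_right volume a).setLIntegral_comp_preimage_emb
    (measurableEmbedding_addRight a) (fun u => ρ (g (u - a))) (Ioc a (a + b))
  simp only [preimage_add_const_Ioc, sub_self, add_sub_cancel_left, add_sub_cancel_right]
    at hshift
  have hcover : Icc 0 (a + b) ⊆ Icc 0 a ∪ Ioc a (a + b) := fun t ht =>
    (le_or_gt t a).imp (fun h => ⟨ht.1, h⟩) (fun h => ⟨h, ht.2⟩)
  calc ∫⁻ t in Icc 0 (a + b), ρ (glue f g a t)
      ≤ ∫⁻ t in Icc 0 a ∪ Ioc a (a + b), ρ (glue f g a t) := lintegral_mono_set hcover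
    _ ≤ (∫⁻ t in Icc 0 a, ρ (glue f g a t)) + ∫⁻ t in Ioc a (a + b), ρ (glue f g a t) :=
        lintegral_union_le _ _ _
    _ = (∫⁻ t in Icc 0 a, ρ (f t)) + ∫⁻ t in Ioc 0 b, ρ (g t) := by
        rw [hshift]
        congr 1
        · exact setLIntegral_congr_fun measurableSet_Icc fun t ht => by rw [glue_of_le ht.2]
        · exact setLIntegral_congr_fun measurableSet_Ioc fun t ht => by
            rw [glue, if_neg ht.1.not_ge]
    _ ≤ (∫⁻ t in Icc 0 a, ρ (f t)) + ∫⁻ t in Icc 0 b, ρ (g t) := by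
        gcongr
        exact Ioc_subset_Icc_self

end Glue

namespace Curve

variable {W : Type*} [MetricSpace W]

def map {V : Type*} [MetricSpace V] (γ : Curve W) (φ : W → V) (hφ : LipschitzWith 1 φ) :
    Curve V where
  toFun := φ ∘ γ.toFun
  len := γ.len
  len_nonneg := γ.len_nonneg
  lip := by simpa using hφ.comp_lipschitzOnWith γ.lip

def const (z : W) : Curve W where
  toFun := fun _ => z
  len := 0
  len_nonneg := le_rfl
  lip := (LipschitzWith.const z).lipschitzOnWith.weaken zero_le_one

theorem const_integ (z : W) (ρ : W → ℝ≥0∞) : (const z).integ ρ = 0 :=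
  setLIntegral_measure_zero _ _ (by simp [const])

noncomputable def reverse (γ : Curve W) : Curve W where
  toFun := fun t => γ.toFun (γ.len - t)
  len := γ.len
  len_nonneg := γ.len_nonneg
  lip := by
    intro s hs t ht
    rw [← edist_sub_left γ.len s t]
    exact γ.lip ⟨sub_nonneg.2 hs.2, by linarith [hs.1]⟩ ⟨sub_nonneg.2 ht.2, by linarith [ht.1]⟩

@[simp] theorem reverse_start (γ : Curve W) : γ.reverse.start = γ.finish := by
  simp [reverse, start, finish]

@[simp] theorem reverse_finish (γ : Curve W) : γ.reverse.finish = γ.start := by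
  simp [reverse, start, finish]

theorem reverse_integ (γ : Curve W) (ρ : W → ℝ≥0∞) : γ.reverse.integ ρ = γ.integ ρ := by
  have := (Measure.measurePreserving_sub_left volume γ.len).setLIntegral_comp_preimage_emb
    (MeasurableEquiv.subLeft γ.len).measurableEmbedding (fun t => ρ (γ.toFun t)) (Icc 0 γ.len)
  simpa [integ, reverse, preimage_const_sub_Icc] using this

noncomputable def trans (γ₁ γ₂ : Curve W) (h : γ₁.finish = γ₂.start) : Curve W where
  toFun := glue γ₁.toFun γ₂.toFun γ₁.len
  len := γ₁.len + γ₂.len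
  len_nonneg := add_nonneg γ₁.len_nonneg γ₂.len_nonneg
  lip := lipschitzOnWith_glue h γ₁.lip γ₂.lip

variable (γ₁ γ₂ : Curve W) (h : γ₁.finish = γ₂.start)

@[simp] theorem trans_start : (γ₁.trans γ₂ h).start = γ₁.start :=
  glue_of_le γ₁.len_nonneg

@[simp] theorem trans_finish : (γ₁.trans γ₂ h).finish = γ₂.finish := by
  simp only [trans, finish, glue_of_ge h (le_add_of_nonneg_right γ₂.len_nonneg),
    add_sub_cancel_left]

theorem trans_integ_le (ρ : W → ℝ≥0∞) :
    (γ₁.trans γ₂ h).integ ρ ≤ γ₁.integ ρ + γ₂.integ ρ :=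
  setLIntegral_glue_le ρ

end Curve

namespace Curve

variable {W : Type*} [MetricSpace W] (c : ℕ → Curve W)

def lenUpTo (n : ℕ) : ℝ := ∑ m ∈ Finset.range n, (c m).len

/-- The pieces `c 0, …, c (n - 1)` run one after the other, on `[0, lenUpTo c n]`. -/
noncomputable def concatUpTo : ℕ → ℝ → W
  | 0 => fun _ => (c 0).start
  | n + 1 => glue (concatUpTo n) (c n).toFun (lenUpTo c n)

theorem lenUpTo_succ (n : ℕ) : lenUpTo c (n + 1) = lenUpTo c n + (c n).len :=
  Finset.sum_range_succ _ _

theorem lenUpTo_mono : Monotone (lenUpTo c) :=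
  monotone_nat_of_le_succ fun n => by simp [lenUpTo_succ, (c n).len_nonneg]

variable {c}

theorem concatUpTo_of_le {n m : ℕ} {t : ℝ} (hnm : n ≤ m) (ht : t ≤ lenUpTo c n) :
    concatUpTo c m t = concatUpTo c n t := by
  induction m, hnm using Nat.le_induction with
  | base => rfl
  | succ m hnm ih => rw [concatUpTo, glue_of_le (ht.trans (lenUpTo_mono c hnm)), ih]

theorem setLIntegral_concatUpTo_le (ρ : W → ℝ≥0∞) (n : ℕ) :
    ∫⁻ t in Icc 0 (lenUpTo c n), ρ (concatUpTo c n t) ≤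
      ∑ m ∈ Finset.range n, (c m).integ ρ := by
  induction n with
  | zero => simp [lenUpTo]
  | succ n ih =>
    rw [lenUpTo_succ, Finset.sum_range_succ]
    exact (setLIntegral_glue_le ρ).trans (add_le_add ih le_rfl)

variable (hchain : ∀ n, (c n).finish = (c (n + 1)).start)
include hchain

theorem concatUpTo_lenUpTo (n : ℕ) : concatUpTo c n (lenUpTo c n) = (c n).start := by
  induction n with
  | zero => rfl
  | succ n ih =>
    rw [concatUpTo, lenUpTo_succ, glue_of_ge ih (le_add_of_nonneg_right (c n).len_nonneg),
      add_sub_cancel_left]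
    exact hchain n

theorem lipschitzOnWith_concatUpTo (n : ℕ) :
    LipschitzOnWith 1 (concatUpTo c n) (Icc 0 (lenUpTo c n)) := by
  induction n with
  | zero => exact (LipschitzWith.const _).lipschitzOnWith.weaken zero_le_one
  | succ n ih =>
    rw [lenUpTo_succ]
    exact lipschitzOnWith_glue (concatUpTo_lenUpTo hchain n) ih (c n).lip

end Curve

namespace Curve

variable {W : Type*} [MetricSpace W] {c : ℕ → Curve W} {w : W}

open Classical in
noncomputable def limitFun (c : ℕ → Curve W) (w : W) (t : ℝ) : W :=
  if h : ∃ n, t ≤ lenUpTo c n then concatUpTo c (Nat.find h) t else w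

theorem limitFun_eq {n : ℕ} {t : ℝ} (ht : t ≤ lenUpTo c n) :
    limitFun c w t = concatUpTo c n t := by
  classical
  have h : ∃ n, t ≤ lenUpTo c n := ⟨n, ht⟩
  rw [limitFun, dif_pos h]
  exact (concatUpTo_of_le (Nat.find_min' h ht) (Nat.find_spec h)).symm

theorem limitFun_of_forall_lt {t : ℝ} (ht : ∀ n, lenUpTo c n < t) : limitFun c w t = w := by
  rw [limitFun, dif_neg (by simpa using ht)]

variable (hsum : Summable fun n => (c n).len) (hchain : ∀ n, (c n).finish = (c (n + 1)).start)
  (hw : Tendsto (fun n => (c n).finish) atTop (𝓝 w))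
include hsum hchain hw

theorem dist_concatUpTo_le {n : ℕ} {s : ℝ} (hs : s ∈ Icc 0 (lenUpTo c n)) :
    dist (concatUpTo c n s) w ≤ ∑' m, (c m).len - s := by
  rw [dist_comm, ← Metric.mem_closedBall]
  refine Metric.isClosed_closedBall.mem_of_tendsto hw (eventually_atTop.2 ⟨n, fun m hm => ?_⟩)
  have hs' : s ∈ Icc 0 (lenUpTo c (m + 1)) := ⟨hs.1, hs.2.trans (lenUpTo_mono c (by omega))⟩
  have hend : lenUpTo c (m + 1) ∈ Icc 0 (lenUpTo c (m + 1)) := ⟨hs'.1.trans hs'.2, le_rfl⟩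
  rw [Metric.mem_closedBall, hchain, ← concatUpTo_lenUpTo hchain,
    ← concatUpTo_of_le (by omega : n ≤ m + 1) hs.2]
  calc dist (concatUpTo c (m + 1) (lenUpTo c (m + 1))) (concatUpTo c (m + 1) s)
      ≤ dist (lenUpTo c (m + 1)) s := by
        simpa using (lipschitzOnWith_concatUpTo hchain (m + 1)).dist_le_mul _ hend _ hs'
    _ = lenUpTo c (m + 1) - s := by rw [Real.dist_eq, abs_of_nonneg (by linarith [hs'.2])]
    _ ≤ ∑' m, (c m).len - s := by
        gcongr
        exact hsum.sum_le_tsum _ fun i _ => (c i).len_nonneg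

theorem lipschitzOnWith_limitFun :
    LipschitzOnWith 1 (limitFun c w) (Icc 0 (∑' m, (c m).len)) := by
  refine lipschitzOnWith_of_forall_le fun s hs t ht hst => ?_
  rw [NNReal.coe_one, one_mul]
  by_cases hnt : ∃ n, t ≤ lenUpTo c n
  · obtain ⟨n, hn⟩ := hnt
    rw [limitFun_eq (hst.trans hn), limitFun_eq hn]
    simpa [Real.dist_eq, abs_of_nonpos (sub_nonpos.2 hst)] using
      (lipschitzOnWith_concatUpTo hchain n).dist_le_mul s ⟨hs.1, hst.trans hn⟩ t ⟨ht.1, hn⟩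
  simp only [not_exists, not_le] at hnt
  have htsum : ∑' m, (c m).len ≤ t :=
    le_of_tendsto' hsum.hasSum.tendsto_sum_nat fun n => (hnt n).le
  rw [limitFun_of_forall_lt hnt]
  by_cases hns : ∃ n, s ≤ lenUpTo c n
  · obtain ⟨n, hn⟩ := hns
    rw [limitFun_eq hn]
    linarith [dist_concatUpTo_le hsum hchain hw ⟨hs.1, hn⟩]
  · rw [limitFun_of_forall_lt (t := s) (by simpa using hns), dist_self]
    linarith

theorem limitFun_tsum : limitFun c w (∑' m, (c m).len) = w := by
  by_cases h : ∃ n, ∑' m, (c m).len ≤ lenUpTo c n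
  · obtain ⟨n, hn⟩ := h
    rw [limitFun_eq hn, ← dist_le_zero]
    simpa using dist_concatUpTo_le hsum hchain hw ⟨tsum_nonneg fun m => (c m).len_nonneg, hn⟩
  · exact limitFun_of_forall_lt (by simpa using h)

omit hchain hw in
theorem setLIntegral_limitFun_le (ρ : W → ℝ≥0∞) :
    ∫⁻ t in Icc 0 (∑' m, (c m).len), ρ (limitFun c w t) ≤ ∑' n, (c n).integ ρ := by
  have hcover : Icc 0 (∑' m, (c m).len) ⊆ (⋃ n, Icc 0 (lenUpTo c n)) ∪ {∑' m, (c m).len} := by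
    intro t ht
    rcases ht.2.lt_or_eq with hlt | heq
    · obtain ⟨n, hn⟩ := (hsum.hasSum.tendsto_sum_nat.eventually (eventually_gt_nhds hlt)).exists
      exact Or.inl (mem_iUnion.2 ⟨n, ht.1, hn.le⟩)
    · exact Or.inr heq
  have hmono : Monotone fun n => Icc (0 : ℝ) (lenUpTo c n) :=
    fun n m hnm => Icc_subset_Icc_right (lenUpTo_mono c hnm)
  calc ∫⁻ t in Icc 0 (∑' m, (c m).len), ρ (limitFun c w t)
      ≤ ∫⁻ t in (⋃ n, Icc 0 (lenUpTo c n)) ∪ {∑' m, (c m).len}, ρ (limitFun c w t) :=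
        lintegral_mono_set hcover
    _ ≤ (∫⁻ t in ⋃ n, Icc 0 (lenUpTo c n), ρ (limitFun c w t)) + 0 :=
        (lintegral_union_le _ _ _).trans (add_le_add le_rfl (by simp))
    _ = ⨆ n, ∫⁻ t in Icc 0 (lenUpTo c n), ρ (concatUpTo c n t) := by
        rw [add_zero, setLIntegral_iUnion_of_directed _ hmono.directed_le]
        exact iSup_congr fun n => setLIntegral_congr_fun measurableSet_Icc
          fun t ht => by rw [limitFun_eq ht.2]
    _ ≤ ∑' n, (c n).integ ρ :=
        iSup_le fun n => (setLIntegral_concatUpTo_le ρ n).trans (ENNReal.sum_le_tsum _)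

noncomputable def limit : Curve W where
  toFun := limitFun c w
  len := ∑' m, (c m).len
  len_nonneg := tsum_nonneg fun m => (c m).len_nonneg
  lip := lipschitzOnWith_limitFun hsum hchain hw

@[simp] theorem limit_start : (limit hsum hchain hw).start = (c 0).start :=
  limitFun_eq (n := 0) (by simp [lenUpTo])

@[simp] theorem limit_finish : (limit hsum hchain hw).finish = w :=
  limitFun_tsum hsum hchain hw

theorem limit_len : (limit hsum hchain hw).len = ∑' m, (c m).len := rfl

theorem limit_integ_le (ρ : W → ℝ≥0∞) : (limit hsum hchain hw).integ ρ ≤ ∑' n, (c n).integ ρ :=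
  setLIntegral_limitFun_le hsum ρ

end Curve

theorem exists_integ_eq_zero_of_not_infNegligible {X : Type*} [MetricSpace X]
    [MeasurableSpace X] [BorelSpace X] {μ : Measure X} {Γ : Set (Curve X)}
    (hΓ : ¬ InfNegligible μ Γ) {ρ : X → ℝ≥0∞} (hρ : Measurable ρ) (hρ0 : ∀ᵐ z ∂μ, ρ z = 0) :
    ∃ γ ∈ Γ, γ.integ ρ = 0 := by
  by_contra! hpos
  -- `∞ * ρ` still vanishes a.e., and has infinite integral over every curve where `ρ` does not
  refine hΓ ⟨fun z => ∞ * ρ z, hρ.const_mul ∞, hρ0.mono fun z hz => by simp [hz], fun γ hγ => ?_⟩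
  have hmeas : AEMeasurable (fun s => ρ (γ.toFun s)) (volume.restrict (Icc 0 γ.len)) :=
    hρ.comp_aemeasurable (γ.lip.continuousOn.aemeasurable measurableSet_Icc)
  rw [Curve.integ, lintegral_const_mul'' ∞ hmeas]
  exact ENNReal.top_mul (hpos γ hγ)

theorem VeryThick.exists_integ_eq_zero_of_isometry {X Y : Type*} [MetricSpace X]
    [MeasurableSpace X] [BorelSpace X] [MetricSpace Y] [MeasurableSpace Y]
    {μ : Measure X} {C : ℝ} {R : ℝ≥0∞} (h : VeryThick μ C R) {ι : X → Y} (hι : Isometry ι)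
    (hιm : Measurable ι) {ρ : Y → ℝ≥0∞} (hρ : Measurable ρ) (hρ0 : ∀ᵐ y ∂μ.map ι, ρ y = 0)
    {x₀ a b : X} (ha : edist a x₀ < R) (hb : edist b x₀ < R) :
    ∃ γ ∈ qcFam C (ι a) (ι b), γ.integ ρ = 0 := by
  obtain ⟨γ, ⟨rfl, rfl, hlen⟩, hγ⟩ := exists_integ_eq_zero_of_not_infNegligible
    (h x₀ a b ha hb) (hρ.comp hιm)
    ((ae_map_iff hιm.aemeasurable (hρ (measurableSet_singleton 0))).1 hρ0)
  exact ⟨γ.map ι hι.lipschitz, ⟨rfl, rfl, by rwa [hι.dist_eq]⟩, hγ⟩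

section Closure

variable {W : Type*} [MetricSpace W] {ρ : W → ℝ≥0∞} {C : ℝ} {S : Set W}
  (hS : ∀ a ∈ S, ∀ b ∈ S, ∃ γ ∈ qcFam C a b, γ.integ ρ = 0)
include hS

theorem exists_curve_integ_eq_zero_to_mem_closure (hC : 0 ≤ C) {x : W} (hx : x ∈ closure S)
    {δ : ℝ} (hδ : 0 < δ) :
    ∃ a ∈ S, dist a x < δ ∧ ∃ γ : Curve W,
      γ.start = a ∧ γ.finish = x ∧ γ.len ≤ 4 * C * δ ∧ γ.integ ρ = 0 := by
  choose p hpS hpx using fun n : ℕ => Metric.mem_closure_iff.1 hx (δ * (1 / 2) ^ n) (by positivity)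
  choose c hc hc0 using fun n => hS (p n) (hpS n) (p (n + 1)) (hpS (n + 1))
  have hlen (n : ℕ) : (c n).len ≤ 2 * C * δ * (1 / 2) ^ n := by
    have hdist : dist (p n) (p (n + 1)) ≤ 2 * δ * (1 / 2) ^ n := by
      calc dist (p n) (p (n + 1)) ≤ dist x (p n) + dist x (p (n + 1)) := dist_triangle_left _ _ _
        _ ≤ δ * (1 / 2) ^ n + δ * (1 / 2) ^ (n + 1) := add_le_add (hpx n).le (hpx (n + 1)).le
        _ ≤ 2 * δ * (1 / 2) ^ n := by
          rw [pow_succ]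
          nlinarith [mul_pos hδ (pow_pos (by norm_num : (0 : ℝ) < 1 / 2) n)]
    calc (c n).len ≤ C * dist (p n) (p (n + 1)) := (hc n).2.2
      _ ≤ C * (2 * δ * (1 / 2) ^ n) := by gcongr
      _ = 2 * C * δ * (1 / 2) ^ n := by ring
  have hgeom : HasSum (fun n : ℕ => 2 * C * δ * (1 / 2) ^ n) (4 * C * δ) := by
    have := hasSum_geometric_two.mul_left (2 * C * δ)
    rwa [show 2 * C * δ * 2 = 4 * C * δ by ring] at this
  have hsum : Summable fun n => (c n).len :=
    hgeom.summable.of_nonneg_of_le (fun n => (c n).len_nonneg) hlen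
  have hchain (n : ℕ) : (c n).finish = (c (n + 1)).start := (hc n).2.1.trans (hc (n + 1)).1.symm
  have hp : Tendsto p atTop (𝓝 x) := by
    refine tendsto_iff_dist_tendsto_zero.2 (squeeze_zero (g := fun n => δ * (1 / 2) ^ n)
      (fun _ => dist_nonneg) (fun n => by rw [dist_comm]; exact (hpx n).le) ?_)
    simpa using (tendsto_pow_atTop_nhds_zero_of_lt_one (by norm_num : (0 : ℝ) ≤ 1 / 2)
      (by norm_num)).const_mul δ
  have hw : Tendsto (fun n => (c n).finish) atTop (𝓝 x) := by
    simp only [(hc _).2.1]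
    exact hp.comp (tendsto_add_atTop_nat 1)
  refine ⟨p 0, hpS 0, by simpa [dist_comm] using hpx 0, Curve.limit hsum hchain hw,
    by simp [(hc 0).1], Curve.limit_finish hsum hchain hw, ?_, ?_⟩
  · rw [Curve.limit_len, ← hgeom.tsum_eq]
    exact hsum.tsum_le_tsum hlen hgeom.summable
  · simpa [hc0] using Curve.limit_integ_le hsum hchain hw ρ

theorem exists_mem_qcFam_integ_eq_zero_of_mem_closure (hC : 0 < C) {C' : ℝ} (hCC' : C < C')
    {x y : W} (hx : x ∈ closure S) (hy : y ∈ closure S) :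
    ∃ γ ∈ qcFam C' x y, γ.integ ρ = 0 := by
  rcases eq_or_ne x y with rfl | hxy
  · exact ⟨Curve.const x, ⟨rfl, rfl, by simp [Curve.const]⟩, Curve.const_integ x ρ⟩
  set δ := (C' - C) * dist x y / (10 * C) with hδ_def
  have hδ : 0 < δ := by
    have := dist_pos.2 hxy
    have := sub_pos.2 hCC'
    positivity
  obtain ⟨a, haS, hax, γx, hγx₀, hγx₁, hγxlen, hγx0⟩ :=
    exists_curve_integ_eq_zero_to_mem_closure hS hC.le hx hδ
  obtain ⟨b, hbS, hby, γy, hγy₀, hγy₁, hγylen, hγy0⟩ :=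
    exists_curve_integ_eq_zero_to_mem_closure hS hC.le hy hδ
  obtain ⟨γ, ⟨hγ₀, hγ₁, hγlen⟩, hγ0⟩ := hS a haS b hbS
  have h₂ : γ.finish = γy.start := hγ₁.trans hγy₀.symm
  have h₁ : γx.reverse.finish = (γ.trans γy h₂).start := by
    rw [Curve.reverse_finish, Curve.trans_start, hγx₀, hγ₀]
  refine ⟨γx.reverse.trans (γ.trans γy h₂) h₁, ⟨by simp [hγx₁], by simp [hγy₁], ?_⟩, ?_⟩
  · have hab : dist a b ≤ dist x y + 2 * δ := by
      linarith [dist_triangle4 a x y b, dist_comm y b]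
    have hexcess : 10 * C * δ = (C' - C) * dist x y := by
      rw [hδ_def]
      field_simp
    have := mul_le_mul_of_nonneg_left hab hC.le
    change γx.len + (γ.len + γy.len) ≤ C' * dist x y
    linarith
  · refine nonpos_iff_eq_zero.1 ((Curve.trans_integ_le _ _ _ ρ).trans ?_)
    grw [Curve.trans_integ_le, Curve.reverse_integ, hγx0, hγ0, hγy0]
    simp

end Closure

theorem veryThick_completion_general
    {Z : Type*} [MetricSpace Z] [MeasurableSpace Z] [BorelSpace Z]
    [MeasurableSpace (UniformSpace.Completion Z)] [BorelSpace (UniformSpace.Completion Z)]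
    (μ : Measure Z)
    (C : ℝ) (hC : 1 ≤ C) (R : ℝ≥0∞)
    (h : VeryThick μ C R) :
    ∀ C' > C,
      VeryThick (μ.map (UniformSpace.Completion.coe' (α := Z))) C' R := by
  intro C' hC' x₀ x y hx hy ⟨ρ, hρ, hρ0, hρΓ⟩
  set ι := UniformSpace.Completion.coe' (α := Z)
  have hι : Isometry ι := UniformSpace.Completion.coe_isometry
  have hdense : Dense (range ι) := UniformSpace.Completion.denseRange_coe
  obtain ⟨R', hxyR', hR'R⟩ := exists_between (max_lt hx hy)
  obtain ⟨_, ⟨z₀, rfl⟩, hz₀⟩ := hdense.exists_mem_open Metric.isOpen_eball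
    ⟨x₀, Metric.mem_eball_self (tsub_pos_of_lt hR'R)⟩
  have hcenter {a : Z} (ha : ι a ∈ Metric.eball x₀ R') : edist a z₀ < R := by
    rw [← hι.edist_eq]
    calc edist (ι a) (ι z₀) ≤ edist (ι a) x₀ + edist (ι z₀) x₀ := edist_triangle_right _ _ _
      _ < R' + (R - R') := ENNReal.add_lt_add ha hz₀
      _ = R := add_tsub_cancel_of_le hR'R.le
  have hS : ∀ a ∈ Metric.eball x₀ R' ∩ range ι, ∀ b ∈ Metric.eball x₀ R' ∩ range ι,
      ∃ γ ∈ qcFam C a b, γ.integ ρ = 0 := by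
    rintro _ ⟨ha, a, rfl⟩ _ ⟨hb, b, rfl⟩
    exact h.exists_integ_eq_zero_of_isometry hι hι.continuous.measurable hρ hρ0
      (hcenter ha) (hcenter hb)
  have hclosure := hdense.open_subset_closure_inter (Metric.isOpen_eball (x := x₀) (ε := R'))
  obtain ⟨γ, hγ, hγ0⟩ := exists_mem_qcFam_integ_eq_zero_of_mem_closure hS (by linarith) hC'
    (hclosure ((le_max_left _ _).trans_lt hxyR')) (hclosure ((le_max_right _ _).trans_lt hxyR'))
  simpa [hγ0] using hρΓ γ hγ

/-- If a locally complete, infinitesimally doubling metric measure space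
(balls of positive finite measure) is very ∞-thick (C,R)-quasiconvex, then its metric
completion, with the pushforward measure, is very ∞-thick (C',R)-quasiconvex for every
C' > C. -/
theorem veryThick_completion
    {Z : Type*} [MetricSpace Z] [MeasurableSpace Z] [BorelSpace Z]
    [MeasurableSpace (UniformSpace.Completion Z)] [BorelSpace (UniformSpace.Completion Z)]
    (μ : Measure Z)
    (hloc : LocallyComplete Z)
    (hdb : InfinitesimallyDoubling μ)
    (hballs : BallsPosFin μ)
    (C : ℝ) (hC : 1 ≤ C) (R : ℝ≥0∞) (hR : 0 < R)
    (h : VeryThick μ C R) :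
    ∀ C' > C,
      VeryThick (μ.map (UniformSpace.Completion.coe' (α := Z))) C' R :=
  veryThick_completion_general μ C hC R h
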